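/- arXiv:2010.16367 — 7 statements merged into one kernel-verified Lean document; each statement's English description precedes it below -/
import Mathlib

section
/- Let k₊, k₋ be positive integers, ε₊ an integer coprime to k₊, and G = [[m, p], [n, q]] an integer matrix with det G = mq − np = −k₊k₋, such that k₊ divides both n − ε₊m and q − ε₊p, and gcd((n − ε₊m)/k₊, m) = gcd((q − ε₊p)/k₊, p) = 1. If a, b are integers with 1 = b·p − a·(q − ε₊p)/k₊, then setting ε₋ = a·(n − ε₊m)/k₊ − b·m, the integer n − ε₊m + ε₋q − ε₊ε₋p is divisible by k₊k₋. -/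
/-- Equation (3.4): with gluing data `k₊, k₋ > 0`, `ε₊` coprime to `k₊`, gluing matrix
`[[m, p], [n, q]]` of determinant `−k₊k₋` satisfying (1.8a) and (1.9a), and `a, b, ε₋`
chosen as in (3.3), the integer `n − ε₊m + ε₋q − ε₊ε₋p` is divisible by `k₊k₋`. -/
theorem stmt3 (kp km εp m p n q a b εm : ℤ)
    (hkp : 0 < kp) (hkm : 0 < km) (hcop : IsCoprime εp kp)
    (hdet : m * q - n * p = -(kp * km))
    (h1 : kp ∣ n - εp * m) (h2 : kp ∣ q - εp * p)
    (hg1 : IsCoprime ((n - εp * m) / kp) m)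
    (hg2 : IsCoprime ((q - εp * p) / kp) p)
    (hab : 1 = b * p - a * ((q - εp * p) / kp))
    (hεm : εm = a * ((n - εp * m) / kp) - b * m) :
    kp * km ∣ n - εp * m + εm * q - εp * εm * p := by
  obtain ⟨u, hu⟩ := h1
  obtain ⟨v, hv⟩ := h2
  have hkp0 : kp ≠ 0 := hkp.ne'
  have hu' : (n - εp * m) / kp = u := by rw [hu, Int.mul_ediv_cancel_left _ hkp0]
  have hv' : (q - εp * p) / kp = v := by rw [hv, Int.mul_ediv_cancel_left _ hkp0]
  rw [hu'] at hεm
  rw [hv'] at hab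
  refine ⟨b, ?_⟩
  have hn : n = εp * m + kp * u := by linarith
  have hq : q = εp * p + kp * v := by linarith
  subst hn hq hεm
  linear_combination kp * u * hab + (-b) * hdet
end

section
/- Let k₊, k₋, m, n, p, q, ε₊, ε₋ be integers with np − mq = k₊k₋, k₊ > 0, k₋ > 0, and suppose k₊ ∣ (m − ε₊*n), k₋ ∣ (q + ε₋*n), and k₊k₋ ∣ (p − ε₊*q + ε₋*m − ε₊*ε₋*n), where ε₊* and ε₋* are integers. Then −((m − ε₊*n)/k₊)·((q + ε₋*n)/k₋) ≡ 1 (mod n). -/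
/-- Equation (3.6): with `np − mq = k₊k₋`, `k₊ ∣ m − ε₊*n`, `k₋ ∣ q + ε₋*n` and
`k₊k₋ ∣ p − ε₊*q + ε₋*m − ε₊*ε₋*n`, the integers `A = (m − ε₊*n)/k₊` and
`D = (q + ε₋*n)/k₋` satisfy `−A·D ≡ 1 (mod n)`. -/
theorem stmt4 (kp km m n p q ep em : ℤ) (hkp : 0 < kp) (hkm : 0 < km)
    (hdet : n * p - m * q = kp * km)
    (h1 : kp ∣ m - ep * n) (h2 : km ∣ q + em * n)
    (h3 : kp * km ∣ p - ep * q + em * m - ep * em * n) :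
    -((m - ep * n) / kp * ((q + em * n) / km)) ≡ 1 [ZMOD n] := by
  obtain ⟨a, ha⟩ := h1
  obtain ⟨d, hd⟩ := h2
  obtain ⟨c, hc⟩ := h3
  have hkp0 : kp ≠ 0 := hkp.ne'
  have hkm0 : km ≠ 0 := hkm.ne'
  rw [ha, hd, Int.mul_ediv_cancel_left _ hkp0, Int.mul_ediv_cancel_left _ hkm0]
  have key : a * d = n * c - 1 := by
    have h : kp * km * (a * d) = kp * km * (n * c - 1) := by
      have : (kp * a) * (km * d) = (m - ep * n) * (q + em * n) := by rw [ha, hd]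
      linear_combination this + n * hc - hdet
    exact mul_left_cancel₀ (mul_ne_zero hkp0 hkm0) h
  have : n ∣ 1 - -(a * d) := ⟨c, by rw [key]; ring⟩
  exact (Int.modEq_iff_dvd.mpr this)
end

section
/- Let n > 0 and k be integers and define the Dedekind sum S(k, n) = Σ_{j=1}^{n−1} ((j/n))·((jk/n)), where ((x)) = 0 if x ∈ ℤ and ((x)) = x − ⌊x⌋ − 1/2 otherwise. Then 6n·S(k, n) is an integer. -/
-- The sawtooth function `((x))` of (0.3): `0` for `x ∈ ℤ`, `x − ⌊x⌋ − 1/2` otherwise.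
open Classical in
noncomputable def sawtooth (x : ℝ) : ℝ :=
  if ∃ z : ℤ, (z : ℝ) = x then 0 else x - ⌊x⌋ - 1 / 2

/-- The Dedekind sum `S(k, n) = Σ_{j=1}^{n−1} ((j/n))((jk/n))` of (0.3). -/
noncomputable def dedekindSum (k n : ℤ) : ℝ :=
  ∑ j ∈ Finset.Ioo (0 : ℤ) n, sawtooth ((j : ℝ) / n) * sawtooth ((j * k : ℝ) / n)

/-!
For `0 < j < n` we have `((j/n)) = j/n - 1/2`, and the values `((jk/n))` sum to zero over
`0 < j < n` because the sawtooth is odd and `1`-periodic (pair `j` with `n - j`).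
Hence `6n·S(k, n) = (3/n) Σ j·bⱼ`, where `bⱼ = 2n·((jk/n))` is an integer with
`bⱼ ≡ 2jk (mod n)`. The numerator is therefore `≡ 6k Σ j² = k(n-1)n(2n-1) ≡ 0 (mod n)`.
-/

open Finset

theorem Int.fract_intCast_div_eq_emod {K : Type*} [Field K] [LinearOrder K]
    [IsStrictOrderedRing K] [FloorRing K] (a : ℤ) {n : ℤ} (hn : 0 < n) :
    Int.fract ((a : K) / n) = ((a % n : ℤ) : K) / n := by
  lift n to ℕ using hn.le
  simpa using Int.fract_div_intCast_eq_div_intCast_mod (k := K) (m := a) (n := n)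

theorem sawtooth_eq_fract (x : ℝ) :
    sawtooth x = if Int.fract x = 0 then 0 else Int.fract x - 1 / 2 := by
  have h : (∃ z : ℤ, (z : ℝ) = x) ↔ Int.fract x = 0 := Int.fract_eq_zero_iff.symm
  simp only [sawtooth, h]
  rfl

theorem sawtooth_neg (x : ℝ) : sawtooth (-x) = -sawtooth x := by
  by_cases hx : Int.fract x = 0
  · simp [sawtooth_eq_fract, Int.fract_neg_eq_zero, hx]
  · have h1 : 1 - Int.fract x ≠ 0 := (sub_pos.mpr (Int.fract_lt_one x)).ne'
    simp only [sawtooth_eq_fract, hx, Int.fract_neg hx, h1, if_false]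
    ring

theorem sawtooth_add_intCast (x : ℝ) (m : ℤ) : sawtooth (x + m) = sawtooth x := by
  simp only [sawtooth_eq_fract, Int.fract_add_intCast]

theorem sawtooth_of_mem_Ioo {x : ℝ} (hx : x ∈ Set.Ioo 0 1) : sawtooth x = x - 1 / 2 := by
  rw [sawtooth_eq_fract, Int.fract_eq_self.mpr ⟨hx.1.le, hx.2⟩, if_neg hx.1.ne']

theorem sum_sawtooth_mul_div_eq_zero (k n : ℤ) :
    ∑ j ∈ Ioo (0 : ℤ) n, sawtooth ((j * k : ℝ) / n) = 0 := by
  have hreflect : ∀ j ∈ Ioo (0 : ℤ) n,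
      sawtooth ((j * k : ℝ) / n) + sawtooth (((n - j : ℤ) * k : ℝ) / n) = 0 := by
    intro j hj
    have hn : (n : ℝ) ≠ 0 := by exact_mod_cast ((mem_Ioo.mp hj).1.trans (mem_Ioo.mp hj).2).ne'
    have : ((n - j : ℤ) * k : ℝ) / n = -((j * k : ℝ) / n) + k := by
      push_cast
      field_simp
      ring
    rw [this, sawtooth_add_intCast, sawtooth_neg, add_neg_cancel]
  refine sum_involution (fun j _ ↦ n - j) hreflect (fun j hj hne hfix ↦ hne ?_)
    (fun j hj ↦ by simp only [mem_Ioo] at hj ⊢; omega) (fun j _ ↦ sub_sub_cancel n j)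
  have := hreflect j hj
  rw [hfix] at this
  linarith

def sawtoothNum (a n : ℤ) : ℤ := if n ∣ a then 0 else 2 * (a % n) - n

theorem two_mul_mul_sawtooth_div (a : ℤ) {n : ℤ} (hn : 0 < n) :
    2 * n * sawtooth ((a : ℝ) / n) = sawtoothNum a n := by
  have hn' : (n : ℝ) ≠ 0 := by positivity
  have hfract_eq_zero : ((a % n : ℤ) : ℝ) / n = 0 ↔ n ∣ a := by
    rw [div_eq_zero_iff, or_iff_left hn', Int.cast_eq_zero, Int.dvd_iff_emod_eq_zero]
  rw [sawtooth_eq_fract, Int.fract_intCast_div_eq_emod a hn, sawtoothNum]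
  split_ifs with h h' h'
  · simp
  · exact absurd (hfract_eq_zero.mp h) h'
  · exact absurd (hfract_eq_zero.mpr h') h
  · push_cast
    field_simp

theorem sawtoothNum_modEq (a n : ℤ) : sawtoothNum a n ≡ 2 * a [ZMOD n] := by
  rw [sawtoothNum]
  split_ifs with h
  · exact (Int.modEq_zero_iff_dvd.mpr (h.mul_left 2)).symm
  · simpa using ((Int.mod_modEq a n).mul_left 2).sub (Int.modEq_zero_iff_dvd.mpr (dvd_refl n))

theorem six_mul_sum_Ico_sq (m : ℕ) :
    6 * ∑ j ∈ Ico (0 : ℤ) m, j ^ 2 = m * (m - 1) * (2 * m - 1) := by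
  induction m with
  | zero => simp
  | succ m ih =>
    push_cast
    rw [← insert_Ico_right_eq_Ico_add_one (by positivity), sum_insert (by simp), mul_add, ih]
    ring

theorem dvd_six_mul_sum_Ioo_sq {n : ℤ} (hn : 0 < n) :
    n ∣ 6 * ∑ j ∈ Ioo (0 : ℤ) n, j ^ 2 := by
  have hIco : ∑ j ∈ Ico (0 : ℤ) n, j ^ 2 = ∑ j ∈ Ioo (0 : ℤ) n, j ^ 2 := by
    rw [← Ioo_insert_left hn, sum_insert (by simp), zero_pow two_ne_zero, zero_add]
  lift n to ℕ using hn.le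
  rw [← hIco, six_mul_sum_Ico_sq]
  exact ⟨(n - 1) * (2 * n - 1), by ring⟩

theorem dedekindSum_eq_sum_div_mul_sawtooth (k n : ℤ) :
    dedekindSum k n = ∑ j ∈ Ioo (0 : ℤ) n, (j / n : ℝ) * sawtooth ((j * k : ℝ) / n) := by
  have hsub : dedekindSum k n =
      ∑ j ∈ Ioo (0 : ℤ) n, (j / n - 1 / 2 : ℝ) * sawtooth ((j * k : ℝ) / n) := by
    refine sum_congr rfl fun j hj ↦ ?_
    obtain ⟨hj0, hjn⟩ := mem_Ioo.mp hj
    have hn : (0 : ℝ) < n := by exact_mod_cast hj0.trans hjn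
    rw [sawtooth_of_mem_Ioo ⟨div_pos (by exact_mod_cast hj0) hn,
      (div_lt_one hn).mpr (by exact_mod_cast hjn)⟩]
  simp only [hsub, sub_mul, sum_sub_distrib, ← mul_sum, sum_sawtooth_mul_div_eq_zero, mul_zero,
    sub_zero]

theorem six_mul_mul_dedekindSum (k : ℤ) {n : ℤ} (hn : 0 < n) :
    6 * n * dedekindSum k n =
      ((∑ j ∈ Ioo (0 : ℤ) n, 3 * j * sawtoothNum (j * k) n : ℤ) : ℝ) / n := by
  have hn' : (n : ℝ) ≠ 0 := by positivity
  rw [dedekindSum_eq_sum_div_mul_sawtooth, mul_sum, Int.cast_sum, sum_div]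
  refine sum_congr rfl fun j _ ↦ ?_
  rw [Int.cast_mul, ← two_mul_mul_sawtooth_div _ hn]
  push_cast
  field_simp
  ring

theorem dvd_sum_mul_sawtoothNum (k : ℤ) {n : ℤ} (hn : 0 < n) :
    n ∣ ∑ j ∈ Ioo (0 : ℤ) n, 3 * j * sawtoothNum (j * k) n := by
  have hcong : ∑ j ∈ Ioo (0 : ℤ) n, 3 * j * sawtoothNum (j * k) n ≡
      k * (6 * ∑ j ∈ Ioo (0 : ℤ) n, j ^ 2) [ZMOD n] := by
    rw [mul_sum, mul_sum]
    refine Int.ModEq.sum fun j _ ↦ ?_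
    calc 3 * j * sawtoothNum (j * k) n ≡ 3 * j * (2 * (j * k)) [ZMOD n] :=
          (sawtoothNum_modEq _ _).mul_left _
      _ = k * (6 * j ^ 2) := by ring
  have hzero : k * (6 * ∑ j ∈ Ioo (0 : ℤ) n, j ^ 2) ≡ 0 [ZMOD n] :=
    Int.modEq_zero_iff_dvd.mpr ((dvd_six_mul_sum_Ioo_sq hn).mul_left k)
  exact Int.modEq_zero_iff_dvd.mp (hcong.trans hzero)

/-- Equation (0.3): `S(k, n) ∈ (1/(6n))·ℤ`, i.e. `6n·S(k, n)` is an integer. -/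
theorem stmt5 (k n : ℤ) (hn : 0 < n) :
    ∃ z : ℤ, 6 * (n : ℝ) * dedekindSum k n = z := by
  obtain ⟨z, hz⟩ := dvd_sum_mul_sawtoothNum k hn
  refine ⟨z, ?_⟩
  rw [six_mul_mul_dedekindSum k hn, hz]
  push_cast
  field_simp
end

section
/- For reduced fractions e/f ≠ g/h ∈ ℚ (with f, h > 0 and gcd(e,f) = gcd(g,h) = 1), set k = eh − fg and assume k > 0. Then there is a unique ε ∈ (ℤ/k)^× such that k divides both g − εe and h − εf. -/
/-- Lemma 4.6: for reduced fractions `e/f ≠ g/h` (with `f, h > 0`, `gcd(e,f) = gcd(g,h) = 1`)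
and `k = eh − fg > 0`, there is a unique unit `ε` modulo `k` such that `k` divides both
`g − εe` and `h − εf`. -/
theorem stmt13 (e f g h : ℤ) (hf : 0 < f) (hh : 0 < h)
    (hef : IsCoprime e f) (hgh : IsCoprime g h)
    (hne : e * h ≠ f * g) (k : ℤ) (hk : k = e * h - f * g) (hkpos : 0 < k) :
    ∃ ε : ℤ, IsCoprime ε k ∧ (k ∣ g - ε * e) ∧ (k ∣ h - ε * f) ∧
      ∀ ε' : ℤ, (k ∣ g - ε' * e) → (k ∣ h - ε' * f) → ε' ≡ ε [ZMOD k] := by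
  obtain ⟨a, b, hab⟩ := hef
  obtain ⟨c, d, hcd⟩ := hgh
  refine ⟨a * g + b * h,
    ⟨c * e + d * f, d * a - c * b, by
      linear_combination (c * g + d * h) * hab + hcd + (d * a - c * b) * hk⟩,
    ⟨-b, by linear_combination (-g) * hab + b * hk⟩,
    ⟨a, by linear_combination (-h) * hab + (-a) * hk⟩, ?_⟩
  intro ε' h1 h2
  obtain ⟨x, hx⟩ := h1
  obtain ⟨y, hy⟩ := h2
  exact Int.modEq_iff_dvd.mpr ⟨a * x + b * y, by
    linear_combination a * hx + b * hy + ε' * hab⟩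
end

section
/- Define the cuspidal angle ∠_{e/f}(x, y) = (x − y)/((fx − e)(fy − e)) for a reduced fraction e/f and real numbers x, y with x ≠ e/f ≠ y. Then the cuspidal angle is invariant under SL₂(ℤ): for γ = [[a,b],[c,d]] ∈ SL₂(ℤ) with γ(e/f) again written as a reduced fraction e'/f', we have ∠_{e'/f'}(γx, γy) = ∠_{e/f}(x, y), where γ acts by Möbius transformations γz = (az+b)/(cz+d). -/
/-- The cuspidal angle `∠_{e/f}(x, y) = (x − y)/((fx − e)(fy − e))` of Definition 4.8. -/
noncomputable def cuspAngle (e f : ℤ) (x y : ℝ) : ℝ :=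
  (x - y) / (((f : ℝ) * x - e) * ((f : ℝ) * y - e))

/-!
Numerator and denominator of the cuspidal angle pick up the same automorphy factors: for
`γ ∈ SL₂(ℤ)`, `γx − γy = (x − y)/((cx + d)(cy + d))` and `f' γx − e' = (fx − e)/(cx + d)`,
where `e'/f' = γ(e/f)`. The factors `cx + d` and `cy + d` therefore cancel in the quotient.
-/

section Moebius

variable {K : Type*} [Field K] (a b c d : K)

theorem moebius_sub_moebius {x y : K} (hx : c * x + d ≠ 0) (hy : c * y + d ≠ 0) :
    (a * x + b) / (c * x + d) - (a * y + b) / (c * y + d) =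
      (a * d - b * c) * (x - y) / ((c * x + d) * (c * y + d)) := by
  rw [div_sub_div _ _ hx hy]
  ring

theorem cusp_mul_moebius_sub (e f : K) {x : K} (hx : c * x + d ≠ 0) :
    (c * e + d * f) * ((a * x + b) / (c * x + d)) - (a * e + b * f) =
      (a * d - b * c) * (f * x - e) / (c * x + d) := by
  field_simp
  ring

end Moebius

theorem stmt14_general (e f a b c d : ℤ) (x y : ℝ)
    (hdet : a * d - b * c = 1)
    (hcx : (c : ℝ) * x + d ≠ 0) (hcy : (c : ℝ) * y + d ≠ 0) :
    cuspAngle (a * e + b * f) (c * e + d * f)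
        (((a : ℝ) * x + b) / ((c : ℝ) * x + d)) (((a : ℝ) * y + b) / ((c : ℝ) * y + d)) =
      cuspAngle e f x y := by
  have hdetR : (a : ℝ) * d - b * c = 1 := by exact_mod_cast hdet
  simp only [cuspAngle]
  push_cast
  rw [moebius_sub_moebius _ _ _ _ hcx hcy, cusp_mul_moebius_sub _ _ _ _ _ _ hcx,
    cusp_mul_moebius_sub _ _ _ _ _ _ hcy, hdetR]
  simp only [one_mul]
  rw [div_mul_div_comm, div_div_div_eq, mul_comm (x - y),
    mul_div_mul_left _ _ (mul_ne_zero hcx hcy)]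

/-- `SL₂(ℤ)`-invariance of the cuspidal angle: for `γ = [[a,b],[c,d]] ∈ SL₂(ℤ)` acting by
Möbius transformations, with `γ(e/f)` written as the reduced fraction
`(ae + bf)/(ce + df)`, one has `∠_{γ(e/f)}(γx, γy) = ∠_{e/f}(x, y)`. -/
theorem stmt14 (e f a b c d : ℤ) (x y : ℝ)
    (hred : IsCoprime e f) (hdet : a * d - b * c = 1)
    (hx : (f : ℝ) * x - e ≠ 0) (hy : (f : ℝ) * y - e ≠ 0)
    (hcx : (c : ℝ) * x + d ≠ 0) (hcy : (c : ℝ) * y + d ≠ 0) :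
    cuspAngle (a * e + b * f) (c * e + d * f)
        (((a : ℝ) * x + b) / ((c : ℝ) * x + d)) (((a : ℝ) * y + b) / ((c : ℝ) * y + d)) =
      cuspAngle e f x y :=
  stmt14_general e f a b c d x y hdet hcx hcy
end

section
/- Let Λ ⊂ ℂ be a lattice with basis (ν, λ) where λ = ζ ∈ ℝ>0 and ν = (εζ + iξ)/k for coprime integers ε, k with k > 0 and ξ > 0, and let Λ̃ ⊂ Λ be generated by λ and ℓ·ν for an integer ℓ > 0. Then the smallest positive integer multiple of μ = iξ lying in Λ̃ is (ℓ/gcd(ℓ, k))·μ, and Λ̃ / ⟨λ, (ℓ/gcd(ℓ,k))μ⟩ is cyclic of order k/gcd(ℓ, k). -/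
/-!
With `μ = iξ` we have `μ = kν - εζ`, so `jμ = -jε • ζ + jk • ν` lies in `Λ̃ = ⟨ζ, ℓν⟩` exactly when
`ℓ ∣ jk`, i.e. when `ℓ / g ∣ j` for `g = gcd(ℓ, k)`; this only uses that `ζ` and `ν` are `ℤ`-independent.
Since `(ℓ / g) k = (k / g) ℓ`, the element `(ℓ / g) μ` is `(k / g) • ℓν` modulo `ζ`, so
`⟨ζ, (ℓ / g) μ⟩ = ⟨ζ, (k / g) • ℓν⟩`, and for independent `u, v` the quotient
`⟨u, v⟩ / ⟨u, n • v⟩` is `ℤ / n`.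
-/

namespace AddSubgroup

variable {G : Type*} [AddCommGroup G]

theorem closure_pair_add_zsmul_le (u w : G) (m : ℤ) : closure {u, w + m • u} ≤ closure {u, w} := by
  rw [closure_le, Set.insert_subset_iff, Set.singleton_subset_iff]
  exact ⟨subset_closure (by simp),
    add_mem (subset_closure (by simp)) (zsmul_mem (subset_closure (by simp)) m)⟩

theorem closure_pair_add_zsmul (u w : G) (m : ℤ) : closure {u, w + m • u} = closure {u, w} :=
  le_antisymm (closure_pair_add_zsmul_le u w m)
    (by simpa using closure_pair_add_zsmul_le u (w + m • u) (-m))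

theorem closure_pair_nsmul_right_le (u v : G) (n : ℕ) : closure {u, n • v} ≤ closure {u, v} := by
  rw [closure_le, Set.insert_subset_iff, Set.singleton_subset_iff]
  exact ⟨subset_closure (by simp), nsmul_mem (subset_closure (by simp)) n⟩

variable {u v : G}

theorem zsmul_add_zsmul_mem_closure_pair_nsmul_iff (h : LinearIndependent ℤ ![u, v]) (n : ℕ)
    (a b : ℤ) : a • u + b • v ∈ closure {u, n • v} ↔ (n : ℤ) ∣ b := by
  rw [mem_closure_pair]
  constructor
  · rintro ⟨p, q, hpq⟩
    have hzero : (p - a) • u + (q * n - b) • v = 0 := by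
      rw [sub_smul, sub_smul, mul_smul, natCast_zsmul, ← sub_eq_zero.2 hpq]
      abel
    exact ⟨q, by linarith [sub_eq_zero.1 (LinearIndependent.pair_iff.1 h _ _ hzero).2]⟩
  · rintro ⟨q, rfl⟩
    exact ⟨a, q, by rw [mul_comm, mul_smul, natCast_zsmul]⟩

noncomputable def closurePairEquivProd (h : LinearIndependent ℤ ![u, v]) :
    ℤ × ℤ ≃+ closure {u, v} :=
  let ψ := (zmultiplesHom G u).coprod (zmultiplesHom G v)
  have hψ : Function.Injective ψ := by
    rw [injective_iff_map_eq_zero]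
    rintro ⟨a, b⟩ hab
    exact Prod.ext_iff.2 (LinearIndependent.pair_iff.1 h a b hab)
  have hrange : ψ.range = closure {u, v} := by
    ext x
    simp [ψ, mem_closure_pair]
  (AddMonoidHom.ofInjective hψ).trans (AddEquiv.addSubgroupCongr hrange)

theorem coe_closurePairEquivProd (h : LinearIndependent ℤ ![u, v]) (p : ℤ × ℤ) :
    (closurePairEquivProd h p : G) = p.1 • u + p.2 • v := rfl

noncomputable def quotientClosurePairNsmulEquivZMod (h : LinearIndependent ℤ ![u, v]) (n : ℕ) :
    closure {u, v} ⧸ (closure {u, n • v}).addSubgroupOf (closure {u, v}) ≃+ ZMod n :=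
  let e := closurePairEquivProd h
  let φ : closure {u, v} →+ ZMod n :=
    (Int.castAddHom (ZMod n)).comp ((AddMonoidHom.snd ℤ ℤ).comp e.symm.toAddMonoidHom)
  have hφ : Function.Surjective φ := fun c ↦
    let ⟨b, hb⟩ := ZMod.intCast_surjective c
    ⟨e (0, b), by simp [φ, hb]⟩
  have hker : φ.ker = (closure {u, n • v}).addSubgroupOf (closure {u, v}) := by
    ext x
    rw [AddMonoidHom.mem_ker, mem_addSubgroupOf, ← e.apply_symm_apply x,
      coe_closurePairEquivProd, zsmul_add_zsmul_mem_closure_pair_nsmul_iff h]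
    simp [φ, ZMod.intCast_zmod_eq_zero_iff_dvd]
  (QuotientAddGroup.quotientAddEquivOfEq hker.symm).trans
    (QuotientAddGroup.quotientKerEquivOfSurjective φ hφ)

end AddSubgroup

theorem Nat.dvd_mul_iff_div_gcd_dvd {ℓ k j : ℕ} (hd : 0 < ℓ.gcd k) :
    ℓ ∣ j * k ↔ ℓ / ℓ.gcd k ∣ j := by
  calc ℓ ∣ j * k ↔ ℓ / ℓ.gcd k * ℓ.gcd k ∣ j * (k / ℓ.gcd k) * ℓ.gcd k := by
        rw [Nat.div_mul_cancel (ℓ.gcd_dvd_left k), mul_assoc,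
          Nat.div_mul_cancel (ℓ.gcd_dvd_right k)]
    _ ↔ ℓ / ℓ.gcd k ∣ j * (k / ℓ.gcd k) := Nat.mul_dvd_mul_iff_right hd
    _ ↔ ℓ / ℓ.gcd k ∣ j := (Nat.coprime_div_gcd_div_gcd hd).dvd_mul_right

theorem Complex.linearIndependent_ofReal_pair {r : ℝ} (hr : r ≠ 0) {z : ℂ} (hz : z.im ≠ 0) :
    LinearIndependent ℤ ![(r : ℂ), z] := by
  rw [LinearIndependent.pair_iff]
  intro s t hst
  have ht : t = 0 := by simpa [hz] using congrArg Complex.im hst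
  subst ht
  simpa [hr] using hst

theorem stmt17_general (k ℓ : ℕ) (hk : 0 < k) (hl : 0 < ℓ) (ε : ℤ)
    (ξ ζ : ℝ) (hξ : 0 < ξ) (hζ : 0 < ζ)
    (lam ν μ : ℂ) (hlam : lam = (ζ : ℂ))
    (hν : ν = ((ε : ℂ) * ζ + Complex.I * ξ) / (k : ℂ))
    (hμ : μ = Complex.I * ξ)
    (Lt : AddSubgroup ℂ) (hLt : Lt = AddSubgroup.closure {lam, (ℓ : ℂ) * ν}) :
    IsLeast {j : ℕ | 0 < j ∧ (j : ℂ) * μ ∈ Lt} (ℓ / Nat.gcd ℓ k) ∧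
      ∀ L' : AddSubgroup ℂ,
        L' = AddSubgroup.closure {lam, ((ℓ / Nat.gcd ℓ k : ℕ) : ℂ) * μ} →
        L' ≤ Lt ∧ IsAddCyclic (Lt ⧸ L'.addSubgroupOf Lt) ∧
          Nat.card (Lt ⧸ L'.addSubgroupOf Lt) = k / Nat.gcd ℓ k := by
  subst hlam hν hμ hLt
  set ν : ℂ := ((ε : ℂ) * ζ + Complex.I * ξ) / (k : ℂ)
  have hd : 0 < ℓ.gcd k := Nat.gcd_pos_of_pos_left k hl
  have hindep : LinearIndependent ℤ ![(ζ : ℂ), ν] :=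
    Complex.linearIndependent_ofReal_pair hζ.ne' (by simp [ν, hξ.ne', hk.ne'])
  have hindep' : LinearIndependent ℤ ![(ζ : ℂ), ℓ • ν] :=
    Complex.linearIndependent_ofReal_pair hζ.ne' (by simp [ν, hξ.ne', hk.ne', hl.ne'])
  have hμν (j : ℕ) :
      (j : ℂ) * (Complex.I * ξ) = (-(j * ε)) • (ζ : ℂ) + ((j * k : ℕ) : ℤ) • ν := by
    have hk0 : (k : ℂ) ≠ 0 := by exact_mod_cast hk.ne'
    simp only [ν, zsmul_eq_mul]
    push_cast
    field_simp
    ring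
  have hmem (j : ℕ) : (j : ℂ) * (Complex.I * ξ) ∈ AddSubgroup.closure {(ζ : ℂ), ℓ • ν} ↔
      ℓ / ℓ.gcd k ∣ j := by
    rw [hμν, AddSubgroup.zsmul_add_zsmul_mem_closure_pair_nsmul_iff hindep,
      Int.natCast_dvd_natCast, Nat.dvd_mul_iff_div_gcd_dvd hd]
  rw [← nsmul_eq_mul ℓ ν]
  refine ⟨⟨⟨Nat.div_pos (Nat.gcd_le_left k hl) hd, (hmem _).2 dvd_rfl⟩,
    fun j ⟨hj0, hj⟩ ↦ Nat.le_of_dvd hj0 ((hmem j).1 hj)⟩, ?_⟩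
  rintro L' rfl
  have hcross : ℓ / ℓ.gcd k * k = k / ℓ.gcd k * ℓ := by
    rw [Nat.div_mul_right_comm (ℓ.gcd_dvd_left k), Nat.div_mul_right_comm (ℓ.gcd_dvd_right k),
      mul_comm]
  rw [hμν, hcross, natCast_zsmul, mul_smul, add_comm, AddSubgroup.closure_pair_add_zsmul]
  let e := AddSubgroup.quotientClosurePairNsmulEquivZMod hindep' (k / ℓ.gcd k)
  exact ⟨AddSubgroup.closure_pair_nsmul_right_le _ _ _,
    isAddCyclic_of_surjective e.symm e.symm.surjective,
    by rw [Nat.card_congr e.toEquiv, Nat.card_zmod]⟩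

/-- Covering-space lattice computation from Proposition 3.5: `Λ ⊂ ℂ` has basis
`(ν, λ)` with `λ = ζ` and `ν = (εζ + iξ)/k` (`ε` coprime to `k`), and `Λ̃ ⊂ Λ` is
generated by `λ` and `ℓ·ν`.  Then the least positive integer `j` with `j·μ ∈ Λ̃`
(where `μ = iξ`) is `ℓ/gcd(ℓ,k)`, and the quotient of `Λ̃` by the subgroup generated
by `λ` and `(ℓ/gcd(ℓ,k))·μ` is cyclic of order `k/gcd(ℓ,k)`. -/
theorem stmt17 (k ℓ : ℕ) (hk : 0 < k) (hl : 0 < ℓ) (ε : ℤ)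
    (hε : IsCoprime ε (k : ℤ)) (ξ ζ : ℝ) (hξ : 0 < ξ) (hζ : 0 < ζ)
    (lam ν μ : ℂ) (hlam : lam = (ζ : ℂ))
    (hν : ν = ((ε : ℂ) * ζ + Complex.I * ξ) / (k : ℂ))
    (hμ : μ = Complex.I * ξ)
    (Lt : AddSubgroup ℂ) (hLt : Lt = AddSubgroup.closure {lam, (ℓ : ℂ) * ν}) :
    IsLeast {j : ℕ | 0 < j ∧ (j : ℂ) * μ ∈ Lt} (ℓ / Nat.gcd ℓ k) ∧
      ∀ L' : AddSubgroup ℂ,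
        L' = AddSubgroup.closure {lam, ((ℓ / Nat.gcd ℓ k : ℕ) : ℂ) * μ} →
        L' ≤ Lt ∧ IsAddCyclic (Lt ⧸ L'.addSubgroupOf Lt) ∧
          Nat.card (Lt ⧸ L'.addSubgroupOf Lt) = k / Nat.gcd ℓ k :=
  stmt17_general k ℓ hk hl ε ξ ζ hξ hζ lam ν μ hlam hν hμ Lt hLt
end

section
/- Let G = [[m, p],[n, q]] be an integer matrix with det G = mq − np = −k₊k₋ for positive integers k₊, k₋, and suppose Λ ⊂ ℝ² is a lattice containing sublattices Λ̃₊ (generated by μ₊, λ₊, of index k₊) and Λ̃₋ (generated by μ₋ = (nλ₊' + mμ₊')/k₊ style combinations as in (1.10)), with the primitivity conditions that λ₋ and μ₋ are primitive in Λ, and that Γ₊ = Λ/Λ̃₊ acts freely on both circle factors. Then the index of Λ in Λ̃₊ + Λ̃₋ satisfies [Λ̃₊ + Λ̃₋ : Λ] = gcd(m, p, k₊) = gcd(n, q, k₊) = gcd(m, n, k₋) = gcd(p, q, k₋). -/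
/-!
In the basis `(ν₊, λ₊)` of `Λ` we have `μ₊ = k₊ν₊ - ε₊λ₊`, and membership of `μ₋, λ₋` in `Λ`
forces `μ₋ = mν₊ + aλ₊`, `λ₋ = pν₊ + bλ₊` with `n = mε₊ + k₊a`, `q = pε₊ + k₊b`. Pulled back
to `ℤ²`, `Λ̃₊ + Λ̃₋` contains `(0, 1)`, so its index equals that of its first projection, the
subgroup of `ℤ` generated by `k₊, m, p`: this is `gcd(m, p, k₊)`, which equals `gcd(n, q, k₊)`
because `ε₊` is a unit modulo `k₊`. The same computation in the basis `(ν₋, λ₋)`, where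
`k₋μ₊ = -qμ₋ + nλ₋` and `k₋λ₊ = pμ₋ - mλ₋`, gives `gcd(p, q, k₋) = gcd(m, n, k₋)`.
-/

open AddSubgroup

lemma dvd_gcd_gcd_iff {a b : ℤ} {k d : ℕ} :
    d ∣ Nat.gcd (Int.gcd a b) k ↔ (d : ℤ) ∣ a ∧ (d : ℤ) ∣ b ∧ d ∣ k := by
  rw [Nat.dvd_gcd_iff, Int.dvd_gcd_iff, and_assoc]

lemma gcd_gcd_mul_add_mul_eq_of_isCoprime {k : ℕ} {ε : ℤ} (hε : IsCoprime ε k) (m p a b : ℤ) :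
    Nat.gcd (Int.gcd (m * ε + k * a) (p * ε + k * b)) k = Nat.gcd (Int.gcd m p) k := by
  have key {d : ℕ} (hd : d ∣ k) (c e : ℤ) : (d : ℤ) ∣ c * ε + k * e ↔ (d : ℤ) ∣ c := by
    have hdk : (d : ℤ) ∣ k := Int.natCast_dvd_natCast.mpr hd
    rw [dvd_add_left (hdk.mul_right e)]
    exact ⟨(hε.of_isCoprime_of_dvd_right hdk).symm.dvd_of_dvd_mul_right, (·.mul_right ε)⟩
  refine Nat.dvd_left_iff_eq.mp fun d => ?_
  simp only [dvd_gcd_gcd_iff]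
  exact ⟨fun ⟨hm, hp, hd⟩ => ⟨(key hd _ _).mp hm, (key hd _ _).mp hp, hd⟩,
    fun ⟨hm, hp, hd⟩ => ⟨(key hd _ _).mpr hm, (key hd _ _).mpr hp, hd⟩⟩

lemma index_map_fst_eq_index {S : AddSubgroup (ℤ × ℤ)} (h : ((0 : ℤ), (1 : ℤ)) ∈ S) :
    (S.map (AddMonoidHom.fst ℤ ℤ)).index = S.index := by
  refine index_map_eq S Prod.fst_surjective ?_
  rintro ⟨a, b⟩ hab
  obtain rfl : a = 0 := hab
  simpa using zsmul_mem h b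

lemma natCast_zsmul_eq_of_eq_div {K : Type*} [Field K] [CharZero K] {a b : K} {k : ℕ}
    (hk : k ≠ 0) (h : a = b / k) : (k : ℤ) • a = b := by
  rw [h, natCast_zsmul, nsmul_eq_mul, mul_div_cancel₀ _ (Nat.cast_ne_zero.mpr hk)]

section Lattice

variable {M : Type*} [AddCommGroup M]

def zmultiplesPairHom (x y : M) : ℤ × ℤ →+ M :=
  (zmultiplesHom M x).coprod (zmultiplesHom M y)

@[simp]
lemma zmultiplesPairHom_apply (x y : M) (c : ℤ × ℤ) :
    zmultiplesPairHom x y c = c.1 • x + c.2 • y := by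
  simp [zmultiplesPairHom]

lemma range_zmultiplesPairHom (x y : M) : (zmultiplesPairHom x y).range = closure {x, y} := by
  ext z
  simp [mem_closure_pair]

lemma injective_zmultiplesPairHom {x y : M} (h : LinearIndependent ℤ ![x, y]) :
    Function.Injective (zmultiplesPairHom x y) := by
  rw [injective_iff_map_eq_zero]
  rintro ⟨s, t⟩ hst
  obtain ⟨rfl, rfl⟩ := LinearIndependent.pair_iff.mp h s t (by simpa using hst)
  rfl

lemma LinearIndependent.pair_of_zsmul_eq {x y u v : M} (h : LinearIndependent ℤ ![x, y])
    {k a b c d : ℤ} (hdet : a * d - b * c ≠ 0)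
    (hu : k • u = a • x + b • y) (hv : k • v = c • x + d • y) :
    LinearIndependent ℤ ![u, v] := by
  refine LinearIndependent.pair_iff.mpr fun s t hst => ?_
  have hcomb : (s * a + t * c) • x + (s * b + t * d) • y = 0 := by
    have := congrArg (k • ·) hst
    simp only [smul_add, smul_comm k s, smul_comm k t, hu, hv, smul_zero] at this
    rw [← this]
    module
  obtain ⟨h₁, h₂⟩ := LinearIndependent.pair_iff.mp h _ _ hcomb
  constructor
  · refine (mul_eq_zero.mp ?_).resolve_right hdet
    linear_combination d * h₁ - c * h₂
  · refine (mul_eq_zero.mp ?_).resolve_right hdet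
    linear_combination a * h₂ - b * h₁

lemma zsmul_pair_eq_adjugate [IsAddTorsionFree M] {x y u v : M} {k l m n p q : ℤ} (hk : k ≠ 0)
    (hdet : m * q - n * p = -(k * l)) (hu : k • u = m • x + n • y) (hv : k • v = p • x + q • y) :
    l • x = (-q) • u + n • v ∧ l • y = p • u + (-m) • v := by
  constructor <;> apply smul_right_injective M hk <;> dsimp only
  · linear_combination (norm := module) q • hu - n • hv + hdet • x
  · linear_combination (norm := module) -p • hu + m • hv + hdet • y

lemma mem_closure_pair_of_zsmul_eq {x y ν : M} {k ε : ℤ} (hν : k • ν = x + ε • y) :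
    x ∈ closure {ν, y} :=
  mem_closure_pair.mpr ⟨k, -ε, by rw [hν, neg_smul]; abel⟩

lemma exists_eq_zsmul_add_zsmul_of_mem_closure {x y ν u : M} (h : LinearIndependent ℤ ![x, y])
    {k ε m n : ℤ} (hν : k • ν = x + ε • y) (hu : k • u = m • x + n • y)
    (hmem : u ∈ closure {ν, y}) : ∃ a, n = m * ε + k * a ∧ u = m • ν + a • y := by
  obtain ⟨s, t, rfl⟩ := mem_closure_pair.mp hmem
  have hcoord : s • x + (s * ε + k * t) • y = m • x + n • y := by
    rw [← hu, smul_add, smul_comm k s, hν]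
    module
  obtain ⟨rfl, rfl⟩ := LinearIndependent.pair_iffₛ.mp h _ _ _ _ hcoord
  exact ⟨t, rfl, rfl⟩

lemma relIndex_sup_closure_pair_eq_gcd {ν y x u v : M} (h : LinearIndependent ℤ ![ν, y])
    {k : ℕ} {ε m a p b : ℤ} (hx : x = (k : ℤ) • ν - ε • y) (hu : u = m • ν + a • y)
    (hv : v = p • ν + b • y) :
    (closure {x, y} ⊔ closure {u, v}).relIndex (closure {ν, y}) = Nat.gcd (Int.gcd m p) k := by
  set S : AddSubgroup (ℤ × ℤ) := closure {((k : ℤ), -ε), (0, 1)} ⊔ closure {(m, a), (p, b)}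
  have hgens : closure {x, y} ⊔ closure {u, v} = S.map (zmultiplesPairHom ν y) := by
    rw [AddSubgroup.map_sup, AddMonoidHom.map_closure, AddMonoidHom.map_closure]
    simp [Set.image_insert_eq, hx, hu, hv, sub_eq_add_neg]
  have hfst : S.map (AddMonoidHom.fst ℤ ℤ) =
      AddSubgroup.closure {(k : ℤ), 0} ⊔ AddSubgroup.closure {m, p} := by
    rw [AddSubgroup.map_sup, AddMonoidHom.map_closure, AddMonoidHom.map_closure]
    simp [Set.image_insert_eq]
  rw [hgens, ← range_zmultiplesPairHom, AddMonoidHom.range_eq_map,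
    relIndex_map_map_of_injective _ _ (injective_zmultiplesPairHom h), relIndex_top_right,
    ← index_map_fst_eq_index (mem_sup_left (subset_closure (by simp))), hfst,
    Int.closure_eq_zmultiples, Int.closure_eq_zmultiples, Int.zmultiples_sup, Int.index_zmultiples]
  simp [Nat.gcd_comm]

theorem relIndex_sup_closure_pair_eq_gcd_of_zsmul_eq {x y ν u v : M}
    (h : LinearIndependent ℤ ![x, y]) {k : ℕ} (hk : k ≠ 0) {ε m n p q : ℤ}
    (hε : IsCoprime ε k) (hν : (k : ℤ) • ν = x + ε • y) (hu : (k : ℤ) • u = m • x + n • y)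
    (hv : (k : ℤ) • v = p • x + q • y) (hu_mem : u ∈ closure {ν, y})
    (hv_mem : v ∈ closure {ν, y}) :
    (closure {x, y} ⊔ closure {u, v}).relIndex (closure {ν, y}) = Nat.gcd (Int.gcd m p) k ∧
      (closure {x, y} ⊔ closure {u, v}).relIndex (closure {ν, y}) = Nat.gcd (Int.gcd n q) k := by
  have hνy : LinearIndependent ℤ ![ν, y] :=
    h.pair_of_zsmul_eq (k := k) (a := 1) (b := ε) (c := 0) (d := k) (by simpa using hk)
      (by rw [hν, one_smul]) (by rw [zero_smul, zero_add])
  obtain ⟨a, rfl, hua⟩ := exists_eq_zsmul_add_zsmul_of_mem_closure h hν hu hu_mem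
  obtain ⟨b, rfl, hvb⟩ := exists_eq_zsmul_add_zsmul_of_mem_closure h hν hv hv_mem
  have hindex := relIndex_sup_closure_pair_eq_gcd hνy (eq_sub_of_add_eq hν.symm) hua hvb
  exact ⟨hindex, hindex.trans (gcd_gcd_mul_add_mul_eq_of_isCoprime hε m p a b).symm⟩

end Lattice

/-- Remark 3.4: for a torus matching with lattices `Λ̃₊ = ⟨μ₊, λ₊⟩`,
`Λ̃₋ = ⟨μ₋, λ₋⟩` where `(μ₋, λ₋) = (1/k₊)(μ₊, λ₊)·G` with `det G = −k₊k₋`, and the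
common overlattice `Λ = ⟨ν₊, λ₊⟩ = ⟨ν₋, λ₋⟩` containing `ν₊ = (μ₊ + ε₊λ₊)/k₊` and
`ν₋ = (μ₋ + ε₋λ₋)/k₋` (`ε±` coprime to `k±`), the index of `Λ̃₊ + Λ̃₋` in `Λ` equals
each of `gcd(m, p, k₊)`, `gcd(n, q, k₊)`, `gcd(m, n, k₋)` and `gcd(p, q, k₋)`. -/
theorem stmt18 (kp km : ℕ) (hkp : 0 < kp) (hkm : 0 < km)
    (εp εm m n p q : ℤ)
    (hεp : IsCoprime εp (kp : ℤ)) (hεm : IsCoprime εm (km : ℤ))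
    (hdet : m * q - n * p = -((kp : ℤ) * km))
    (mup lamp mum lamm nup num : ℂ)
    (hind : LinearIndependent ℝ ![mup, lamp])
    (hmum : mum = ((m : ℂ) * mup + (n : ℂ) * lamp) / (kp : ℂ))
    (hlamm : lamm = ((p : ℂ) * mup + (q : ℂ) * lamp) / (kp : ℂ))
    (hnup : nup = (mup + (εp : ℂ) * lamp) / (kp : ℂ))
    (hnum : num = (mum + (εm : ℂ) * lamm) / (km : ℂ))
    (Λ : AddSubgroup ℂ)
    (hΛp : Λ = AddSubgroup.closure {nup, lamp})
    (hΛm : Λ = AddSubgroup.closure {num, lamm}) :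
    (AddSubgroup.closure {mup, lamp} ⊔ AddSubgroup.closure {mum, lamm}).relIndex Λ
        = Nat.gcd (Int.gcd m p) kp ∧
      (AddSubgroup.closure {mup, lamp} ⊔ AddSubgroup.closure {mum, lamm}).relIndex Λ
        = Nat.gcd (Int.gcd n q) kp ∧
      (AddSubgroup.closure {mup, lamp} ⊔ AddSubgroup.closure {mum, lamm}).relIndex Λ
        = Nat.gcd (Int.gcd m n) km ∧
      (AddSubgroup.closure {mup, lamp} ⊔ AddSubgroup.closure {mum, lamm}).relIndex Λ
        = Nat.gcd (Int.gcd p q) km := by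
  simp only [← zsmul_eq_mul] at hmum hlamm hnup hnum
  have hnup' := natCast_zsmul_eq_of_eq_div hkp.ne' hnup
  have hnum' := natCast_zsmul_eq_of_eq_div hkm.ne' hnum
  have hmum' := natCast_zsmul_eq_of_eq_div hkp.ne' hmum
  have hlamm' := natCast_zsmul_eq_of_eq_div hkp.ne' hlamm
  obtain ⟨hmup', hlamp'⟩ := zsmul_pair_eq_adjugate (by exact_mod_cast hkp.ne') hdet hmum' hlamm'
  have hindp : LinearIndependent ℤ ![mup, lamp] := hind.restrict_scalars' ℤ
  have hindm : LinearIndependent ℤ ![mum, lamm] :=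
    hindp.pair_of_zsmul_eq (by rw [hdet]; simp [hkp.ne', hkm.ne']) hmum' hlamm'
  obtain ⟨hmp, hnq⟩ := relIndex_sup_closure_pair_eq_gcd_of_zsmul_eq hindp hkp.ne' hεp
    hnup' hmum' hlamm' (hΛp ▸ hΛm ▸ mem_closure_pair_of_zsmul_eq hnum')
    (hΛp ▸ hΛm ▸ subset_closure (by simp))
  obtain ⟨hqp, hnm⟩ := relIndex_sup_closure_pair_eq_gcd_of_zsmul_eq hindm hkm.ne' hεm
    hnum' hmup' hlamp' (hΛm ▸ hΛp ▸ mem_closure_pair_of_zsmul_eq hnup')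
    (hΛm ▸ hΛp ▸ subset_closure (by simp))
  rw [← hΛp] at hmp hnq
  rw [← hΛm, sup_comm] at hqp hnm
  refine ⟨hmp, hnq, ?_, ?_⟩
  · rw [hnm, Int.gcd_neg, Int.gcd_comm]
  · rw [hqp, Int.neg_gcd, Int.gcd_comm]
end
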